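/- Pullback identity for the primitive 1-form e^t·α under front spinning of a cobordism (Formula (4.9) in the paper): let n ≥ 1, let E be a real normed vector space, and let g : E → ℝ × ℝ^{2n+1} have component functions t, x_1, y_1, …, x_n, y_n, z, each differentiable at p ∈ E. Then for every θ ∈ ℝ and all (v, s) ∈ E × ℝ, writing (T, X_0, Y_0, …, X_n, Y_n, Z) for the component functions of Σg, one has e^{T(p,θ)}·(DZ(p,θ)(v,s) − Σ_{i=0}^{n} Y_i(p,θ)·DX_i(p,θ)(v,s)) = e^{t(p)}·(Dz(p)(v) − Σ_{i=1}^{n} y_i(p)·Dx_i(p)(v)). Equivalently, (Σg)*(e^t α_{n+1}) equals the pullback of g*(e^t α_n) under the projection E × ℝ → E. -/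

import Mathlib

/-!
In the rotated pair `X_0, X_1` the `θ`-derivative terms `± y_1 x_1 sin θ cos θ ds` cancel and
the `p`-derivative terms add up to `(sin² θ + cos² θ) y_1 dx_1 = y_1 dx_1`; every other
component, and the conformal factor `e^T`, is pulled back from `E`.
-/

/-- The `x`-component functions of the front-spun map. -/
noncomputable def spinX {E : Type*} (x : ℕ → E → ℝ) : ℕ → E × ℝ → ℝ
  | 0 => fun q => x 1 q.1 * Real.sin q.2
  | 1 => fun q => x 1 q.1 * Real.cos q.2
  | (i + 2) => fun q => x (i + 2) q.1

/-- The `y`-component functions of the front-spun map. -/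
noncomputable def spinY {E : Type*} (y : ℕ → E → ℝ) : ℕ → E × ℝ → ℝ
  | 0 => fun q => y 1 q.1 * Real.sin q.2
  | 1 => fun q => y 1 q.1 * Real.cos q.2
  | (i + 2) => fun q => y (i + 2) q.1

/-- The `z`-component function of the front-spun map. -/
def spinZ {E : Type*} (z : E → ℝ) : E × ℝ → ℝ := fun q => z q.1

/-- The `t`-component function of the front-spun cobordism. -/
def spinT {E : Type*} (t : E → ℝ) : E × ℝ → ℝ := fun q => t q.1

open Finset

section ProdDeriv

variable {𝕜 E F G : Type*} [NontriviallyNormedField 𝕜]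
  [NormedAddCommGroup E] [NormedSpace 𝕜 E] [NormedAddCommGroup F] [NormedSpace 𝕜 F]
  [NormedAddCommGroup G] [NormedSpace 𝕜 G]

theorem fderiv_comp_fst_apply {f : E → G} {p : E} (hf : DifferentiableAt 𝕜 f p)
    (θ : F) (v : E) (s : F) :
    fderiv 𝕜 (fun q : E × F => f q.1) (p, θ) (v, s) = fderiv 𝕜 f p v := by
  have h : HasFDerivAt (fun q : E × F => f q.1)
      ((fderiv 𝕜 f p).comp (ContinuousLinearMap.fst 𝕜 E F)) (p, θ) :=
    hf.hasFDerivAt.comp (p, θ) hasFDerivAt_fst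
  rw [h.fderiv]
  rfl

theorem fderiv_fst_mul_snd_apply {f : E → 𝕜} {g : 𝕜 → 𝕜} {p : E} {θ : 𝕜}
    (hf : DifferentiableAt 𝕜 f p) (hg : DifferentiableAt 𝕜 g θ) (v : E) (s : 𝕜) :
    fderiv 𝕜 (fun q : E × 𝕜 => f q.1 * g q.2) (p, θ) (v, s) =
      f p * (deriv g θ * s) + g θ * fderiv 𝕜 f p v := by
  have hF : HasFDerivAt (fun q : E × 𝕜 => f q.1)
      ((fderiv 𝕜 f p).comp (ContinuousLinearMap.fst 𝕜 E 𝕜)) (p, θ) :=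
    hf.hasFDerivAt.comp (p, θ) hasFDerivAt_fst
  have hG : HasFDerivAt (fun q : E × 𝕜 => g q.2)
      ((ContinuousLinearMap.smulRight 1 (deriv g θ)).comp (ContinuousLinearMap.snd 𝕜 E 𝕜))
      (p, θ) :=
    hg.hasDerivAt.hasFDerivAt.comp (p, θ) hasFDerivAt_snd
  rw [HasFDerivAt.fderiv (f := fun q : E × 𝕜 => f q.1 * g q.2) (hF.mul hG)]
  simp only [add_apply, smul_apply, ContinuousLinearMap.comp_apply, ContinuousLinearMap.coe_fst',
    ContinuousLinearMap.coe_snd', ContinuousLinearMap.smulRight_apply, one_apply_eq_self,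
    smul_eq_mul]
  ring

end ProdDeriv

section FrontSpinning

variable {E : Type*} [NormedAddCommGroup E] [NormedSpace ℝ E]
  {x : ℕ → E → ℝ} (y : ℕ → E → ℝ) {p : E} (θ : ℝ) (v : E) (s : ℝ)

theorem spinY_mul_fderiv_spinX_zero_add_one (hx : DifferentiableAt ℝ (x 1) p) :
    spinY y 0 (p, θ) * fderiv ℝ (spinX x 0) (p, θ) (v, s) +
        spinY y 1 (p, θ) * fderiv ℝ (spinX x 1) (p, θ) (v, s) =
      y 1 p * fderiv ℝ (x 1) p v := by
  change y 1 p * Real.sin θ * fderiv ℝ (fun q : E × ℝ => x 1 q.1 * Real.sin q.2) (p, θ) (v, s) +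
      y 1 p * Real.cos θ * fderiv ℝ (fun q : E × ℝ => x 1 q.1 * Real.cos q.2) (p, θ) (v, s) = _
  rw [fderiv_fst_mul_snd_apply hx Real.differentiableAt_sin,
    fderiv_fst_mul_snd_apply hx Real.differentiableAt_cos, Real.deriv_sin, Real.deriv_cos]
  linear_combination y 1 p * fderiv ℝ (x 1) p v * Real.sin_sq_add_cos_sq θ

theorem spinY_mul_fderiv_spinX_of_two_le {i : ℕ} (hi : 2 ≤ i)
    (hx : DifferentiableAt ℝ (x i) p) :
    spinY y i (p, θ) * fderiv ℝ (spinX x i) (p, θ) (v, s) = y i p * fderiv ℝ (x i) p v := by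
  obtain ⟨k, rfl⟩ := Nat.exists_eq_add_of_le' hi
  exact congrArg (y (k + 2) p * ·) (fderiv_comp_fst_apply hx θ v s)

theorem sum_spinY_mul_fderiv_spinX {n : ℕ} (hn : 1 ≤ n)
    (hx : ∀ i ∈ Icc 1 n, DifferentiableAt ℝ (x i) p) :
    ∑ i ∈ Icc 0 n, spinY y i (p, θ) * fderiv ℝ (spinX x i) (p, θ) (v, s) =
      ∑ i ∈ Icc 1 n, y i p * fderiv ℝ (x i) p v := by
  rw [← add_sum_Ioc_eq_sum_Icc n.zero_le, ← Icc_add_one_left_eq_Ioc, zero_add,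
    ← add_sum_Ioc_eq_sum_Icc hn, ← add_sum_Ioc_eq_sum_Icc hn, ← Icc_add_one_left_eq_Ioc,
    ← add_assoc, spinY_mul_fderiv_spinX_zero_add_one y θ v s (hx 1 (left_mem_Icc.2 hn))]
  congr 1
  refine sum_congr rfl fun i hi => ?_
  have hi' : 2 ≤ i ∧ i ≤ n := mem_Icc.1 hi
  exact spinY_mul_fderiv_spinX_of_two_le y θ v s hi'.1 (hx i (mem_Icc.2 ⟨by omega, hi'.2⟩))

end FrontSpinning

theorem front_spinning_primitive_one_form_pullback_general
    {E : Type*} [NormedAddCommGroup E] [NormedSpace ℝ E]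
    (n : ℕ) (hn : 1 ≤ n) (t : E → ℝ) (x y : ℕ → E → ℝ) (z : E → ℝ) (p : E)
    (hx : ∀ i ∈ Finset.Icc 1 n, DifferentiableAt ℝ (x i) p)
    (hz : DifferentiableAt ℝ z p) :
    ∀ (θ : ℝ) (v : E) (s : ℝ),
      Real.exp (spinT t (p, θ)) *
          (fderiv ℝ (spinZ z) (p, θ) (v, s) -
            ∑ i ∈ Finset.Icc 0 n, spinY y i (p, θ) * fderiv ℝ (spinX x i) (p, θ) (v, s)) =
        Real.exp (t p) *
          (fderiv ℝ z p v - ∑ i ∈ Finset.Icc 1 n, y i p * fderiv ℝ (x i) p v) := by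
  intro θ v s
  rw [sum_spinY_mul_fderiv_spinX y θ v s hn hx]
  exact congrArg (fun a => Real.exp (t p) * (a - _)) (fderiv_comp_fst_apply hz θ v s)

/-- **Pullback identity for `e^t·α` under front spinning of a cobordism**
(Formula (4.9) in the paper). If the component functions of
`g : E → ℝ × ℝ^{2n+1}` are differentiable at `p`, then for every `θ` and
every `(v, s)`:
`e^{T(p,θ)}·(DZ(p,θ)(v,s) − Σ_{i=0}^{n} Y_i(p,θ)·DX_i(p,θ)(v,s))
  = e^{t(p)}·(Dz(p)(v) − Σ_{i=1}^{n} y_i(p)·Dx_i(p)(v))`,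
i.e. `(Σg)^*(e^t α_{n+1})` is the pullback of `g^*(e^t α_n)` under the
projection `E × ℝ → E`. -/
theorem front_spinning_primitive_one_form_pullback
    {E : Type*} [NormedAddCommGroup E] [NormedSpace ℝ E]
    (n : ℕ) (hn : 1 ≤ n) (t : E → ℝ) (x y : ℕ → E → ℝ) (z : E → ℝ) (p : E)
    (ht : DifferentiableAt ℝ t p)
    (hx : ∀ i ∈ Finset.Icc 1 n, DifferentiableAt ℝ (x i) p)
    (hy : ∀ i ∈ Finset.Icc 1 n, DifferentiableAt ℝ (y i) p)
    (hz : DifferentiableAt ℝ z p) :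
    ∀ (θ : ℝ) (v : E) (s : ℝ),
      Real.exp (spinT t (p, θ)) *
          (fderiv ℝ (spinZ z) (p, θ) (v, s) -
            ∑ i ∈ Finset.Icc 0 n, spinY y i (p, θ) * fderiv ℝ (spinX x i) (p, θ) (v, s)) =
        Real.exp (t p) *
          (fderiv ℝ z p v - ∑ i ∈ Finset.Icc 1 n, y i p * fderiv ℝ (x i) p v) :=
  front_spinning_primitive_one_form_pullback_general n hn t x y z p hx hz
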